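/- arXiv:1802.01229 — 4 statements merged into one kernel-verified Lean document; each statement's English description precedes it below -/
import Mathlib

section
/- Absolute convergence of the (N,N) orbital integral: For every continuous compactly supported function f : GL₂(ℂ) → ℂ and all a, c ∈ ℂ ∖ {0}, the function (x, y) ↦ f(n(x) z(c) s(a) w₀ n(y)) is absolutely integrable on ℂ × ℂ with respect to dA(x) dA(y); in particular the orbital integral J(a, c, f) = ∬_{ℂ×ℂ} f(n(x) z(c) s(a) w₀ n(y)) dA(x) dA(y) is well defined. -/
open MeasureTheory Filter Topology Complex
open scoped ENNReal


/-- `n(x) = [[1, x], [0, 1]]`. -/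
def nMat (x : ℂ) : Matrix (Fin 2) (Fin 2) ℂ := !![1, x; 0, 1]

/-- `z(c) = [[c, 0], [0, c]]`. -/
def zMat (c : ℂ) : Matrix (Fin 2) (Fin 2) ℂ := !![c, 0; 0, c]

/-- `s(a) = [[a, 0], [0, 1/a]]`. -/
noncomputable def sMat (a : ℂ) : Matrix (Fin 2) (Fin 2) ℂ := !![a, 0; 0, a⁻¹]

/-- `w₀ = [[0, 1], [1, 0]]`. -/
def w0Mat : Matrix (Fin 2) (Fin 2) ℂ := !![0, 1; 1, 0]

private lemma NN_entry00 (a c x y : ℂ) :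
    (nMat x * zMat c * sMat a * w0Mat * nMat y) 0 0 = c * a⁻¹ * x := by
  simp [nMat, zMat, sMat, w0Mat, Matrix.mul_apply, Fin.sum_univ_two]
  ring

private lemma NN_entry11 (a c x y : ℂ) :
    (nMat x * zMat c * sMat a * w0Mat * nMat y) 1 1 = c * a⁻¹ * y := by
  simp [nMat, zMat, sMat, w0Mat, Matrix.mul_apply, Fin.sum_univ_two]

/-- **Absolute convergence of the `(N,N)` orbital integral.** For continuous compactly
supported `f : GL₂(ℂ) → ℂ` and `a, c ≠ 0`, the function
`(x, y) ↦ f(n(x) z(c) s(a) w₀ n(y))` is absolutely integrable on `ℂ × ℂ`. -/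
theorem NN_orbital_integral_convergence (f : Matrix (Fin 2) (Fin 2) ℂ → ℂ)
    (hf : Continuous f) (hcs : HasCompactSupport f) (hGL : tsupport f ⊆ {g | g.det ≠ 0})
    (a c : ℂ) (ha : a ≠ 0) (hc : c ≠ 0) :
    Integrable (fun p : ℂ × ℂ => f (nMat p.1 * zMat c * sMat a * w0Mat * nMat p.2))
      volume := by
  have hn : Continuous nMat := by
    apply continuous_matrix
    intro i j
    fin_cases i <;> fin_cases j <;> simp [nMat] <;> fun_prop
  have hM : Continuous (fun p : ℂ × ℂ => nMat p.1 * zMat c * sMat a * w0Mat * nMat p.2) :=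
    ((((hn.comp continuous_fst).mul continuous_const).mul continuous_const).mul
      continuous_const).mul (hn.comp continuous_snd)
  -- bound the (i,i) entries on the support of f
  have hent : ∀ i : Fin 2, Continuous fun M : Matrix (Fin 2) (Fin 2) ℂ => M i i :=
    fun i => (continuous_apply i).comp (continuous_apply i)
  have hKi : ∀ i : Fin 2, ∃ R : ℝ, ∀ M ∈ tsupport f, ‖M i i‖ ≤ R := by
    intro i
    obtain ⟨R, hR⟩ := ((hcs.image (hent i)).isBounded).subset_closedBall 0
    exact ⟨R, fun M hM => by
      simpa [dist_zero_right] using Metric.mem_closedBall.mp (hR ⟨M, hM, rfl⟩)⟩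
  obtain ⟨R0, hR0⟩ := hKi 0
  obtain ⟨R1, hR1⟩ := hKi 1
  set r0 := R0 * ‖a‖ / ‖c‖
  set r1 := R1 * ‖a‖ / ‖c‖
  have key : ∀ (R : ℝ) (z : ℂ), ‖c * a⁻¹ * z‖ ≤ R → ‖z‖ ≤ R * ‖a‖ / ‖c‖ := by
    intro R z hz
    rw [norm_mul, norm_mul, norm_inv] at hz
    have ha' : (0:ℝ) < ‖a‖ := by simpa using ha
    have hc' : (0:ℝ) < ‖c‖ := by simpa using hc
    rw [le_div_iff₀ hc']
    calc ‖z‖ * ‖c‖ = ‖c‖ * ‖a‖⁻¹ * ‖z‖ * ‖a‖ := by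
          rw [mul_assoc, show ‖c‖ * ‖a‖⁻¹ * (‖z‖ * ‖a‖) = ‖c‖ * ‖z‖ * (‖a‖⁻¹ * ‖a‖) by ring,
            inv_mul_cancel₀ ha'.ne', mul_one, mul_comm]
      _ ≤ R * ‖a‖ := by gcongr
  have hbound : ∀ p : ℂ × ℂ, p ∉ (Metric.closedBall (0:ℂ) r0 ×ˢ Metric.closedBall (0:ℂ) r1) →
      f (nMat p.1 * zMat c * sMat a * w0Mat * nMat p.2) = 0 := by
    intro p hp
    by_contra h0
    apply hp
    have hmem := subset_tsupport f h0
    constructor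
    · have h1 := hR0 _ hmem
      rw [NN_entry00] at h1
      simpa [Metric.mem_closedBall, dist_zero_right] using key R0 p.1 h1
    · have h1 := hR1 _ hmem
      rw [NN_entry11] at h1
      simpa [Metric.mem_closedBall, dist_zero_right] using key R1 p.2 h1
  have hsupp : HasCompactSupport
      (fun p : ℂ × ℂ => f (nMat p.1 * zMat c * sMat a * w0Mat * nMat p.2)) :=
    HasCompactSupport.intro
      ((isCompact_closedBall _ _).prod (isCompact_closedBall _ _)) hbound
  exact (hf.comp hM).integrable_of_hasCompactSupport hsupp
end

section
/- Support properties of the (N,N) orbital integral: Let f : GL₂(ℂ) → ℂ be continuous and compactly supported. Then: (i) there exists a compact set K ⊆ ℂ ∖ {0} such that J(a, c, f) = 0 for all a ∈ ℂ ∖ {0} whenever c ∉ K; and (ii) there exists δ > 0 such that J(a, c, f) = 0 for all c ∈ ℂ ∖ {0} whenever 0 < |a| < δ. -/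
open MeasureTheory Filter Topology Complex
open scoped ENNReal


/-- The `(N,N)` orbital integral `J(a, c, f) = ∬ f(n(x) z(c) s(a) w₀ n(y)) dA(x) dA(y)`. -/
noncomputable def Jorb (f : Matrix (Fin 2) (Fin 2) ℂ → ℂ) (a c : ℂ) : ℂ :=
  ∫ p : ℂ × ℂ, f (nMat p.1 * zMat c * sMat a * w0Mat * nMat p.2)

/-! The matrices `n(x) z(c) s(a) w₀ n(y)` have determinant `-c²` and lower-left entry `c / a`.
On the compact support of `f` inside `GL₂(ℂ)` the determinant stays in an annulus
`ε ≤ |det| ≤ M` and the lower-left entry is bounded by some `B`. Hence the integrand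
vanishes identically unless `|c|² ∈ [ε, M]` and `|a| ≥ |c| / B ≥ √ε / B`. -/

noncomputable def orbitMat (a c x y : ℂ) : Matrix (Fin 2) (Fin 2) ℂ :=
  nMat x * zMat c * sMat a * w0Mat * nMat y

lemma det_orbitMat {a : ℂ} (ha : a ≠ 0) (c x y : ℂ) : (orbitMat a c x y).det = -c ^ 2 := by
  simp only [orbitMat, Matrix.det_mul, nMat, zMat, sMat, w0Mat, Matrix.det_fin_two_of]
  field_simp
  ring

lemma orbitMat_one_zero (a c x y : ℂ) : orbitMat a c x y 1 0 = c * a⁻¹ := by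
  simp [orbitMat, nMat, zMat, sMat, w0Mat]

lemma Jorb_eq_zero_of_forall_notMem_tsupport {f : Matrix (Fin 2) (Fin 2) ℂ → ℂ} {a c : ℂ}
    (h : ∀ x y, orbitMat a c x y ∉ tsupport f) : Jorb f a c = 0 := by
  change ∫ p : ℂ × ℂ, f (orbitMat a c p.1 p.2) = 0
  simp only [image_eq_zero_of_notMem_tsupport (h _ _), integral_zero]

lemma isCompact_norm_preimage_Icc {E : Type*} [NormedAddCommGroup E] [ProperSpace E] (r R : ℝ) :
    IsCompact (norm ⁻¹' Set.Icc r R : Set E) :=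
  (isCompact_closedBall 0 R).of_isClosed_subset (isClosed_Icc.preimage continuous_norm)
    fun _ hx => mem_closedBall_zero_iff.2 hx.2

section CompactSubsetGL

variable {S : Set (Matrix (Fin 2) (Fin 2) ℂ)}

lemma exists_norm_mem_Icc_of_orbitMat_mem (hS : IsCompact S) (hSGL : S ⊆ {g | g.det ≠ 0}) :
    ∃ r > (0 : ℝ), ∃ R : ℝ,
      ∀ a c x y, a ≠ 0 → orbitMat a c x y ∈ S → ‖c‖ ∈ Set.Icc r R := by
  obtain ⟨ε, hε, hε_le⟩ := hS.exists_forall_le' (a := 0)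
    (continuous_norm.comp continuous_id.matrix_det).continuousOn
    fun g hg => norm_pos_iff.2 (hSGL hg)
  obtain ⟨M, hM⟩ := hS.exists_bound_of_continuousOn continuous_id.matrix_det.continuousOn
  refine ⟨√ε, Real.sqrt_pos.2 hε, √M, fun a c x y ha hmem => ?_⟩
  have hnorm : ‖(orbitMat a c x y).det‖ = ‖c‖ ^ 2 := by
    rw [det_orbitMat ha, norm_neg, norm_pow]
  exact ⟨(Real.sqrt_le_left (norm_nonneg c)).2 (hnorm ▸ hε_le _ hmem),
    Real.le_sqrt_of_sq_le (hnorm ▸ hM _ hmem)⟩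

lemma exists_pos_le_norm_of_orbitMat_mem (hS : IsCompact S) (hSGL : S ⊆ {g | g.det ≠ 0}) :
    ∃ δ > (0 : ℝ), ∀ a c x y, a ≠ 0 → orbitMat a c x y ∈ S → δ ≤ ‖a‖ := by
  obtain ⟨r, hr, _, hc⟩ := exists_norm_mem_Icc_of_orbitMat_mem hS hSGL
  obtain ⟨B, hB⟩ := hS.exists_bound_of_continuousOn (f := fun g => g 1 0) (by fun_prop)
  refine ⟨r / max B 1, by positivity, fun a c x y ha hmem => ?_⟩
  rw [div_le_iff₀ (by positivity)]
  calc r ≤ ‖c‖ := (hc a c x y ha hmem).1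
    _ = ‖a‖ * ‖orbitMat a c x y 1 0‖ := by
      rw [orbitMat_one_zero, norm_mul, norm_inv, mul_comm,
        inv_mul_cancel_right₀ (norm_ne_zero_iff.2 ha)]
    _ ≤ ‖a‖ * max B 1 := by gcongr; exact (hB _ hmem).trans (le_max_left _ _)

end CompactSubsetGL

theorem NN_orbital_integral_support_general (f : Matrix (Fin 2) (Fin 2) ℂ → ℂ)
    (hcs : HasCompactSupport f) (hGL : tsupport f ⊆ {g | g.det ≠ 0}) :
    (∃ K : Set ℂ, IsCompact K ∧ K ⊆ {(0 : ℂ)}ᶜ ∧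
      ∀ c : ℂ, c ≠ 0 → c ∉ K → ∀ a : ℂ, a ≠ 0 → Jorb f a c = 0) ∧
    (∃ δ > (0 : ℝ), ∀ a : ℂ, a ≠ 0 → ‖a‖ < δ →
      ∀ c : ℂ, c ≠ 0 → Jorb f a c = 0) := by
  obtain ⟨r, hr, R, hc⟩ := exists_norm_mem_Icc_of_orbitMat_mem hcs.isCompact hGL
  obtain ⟨δ, hδ, ha⟩ := exists_pos_le_norm_of_orbitMat_mem hcs.isCompact hGL
  refine ⟨⟨norm ⁻¹' Set.Icc r R, isCompact_norm_preimage_Icc r R, ?_, ?_⟩, δ, hδ, ?_⟩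
  · rintro c hcK rfl
    exact (norm_zero (E := ℂ) ▸ hcK.1).not_gt hr
  · exact fun c _ hcK a ha0 =>
      Jorb_eq_zero_of_forall_notMem_tsupport fun x y hmem => hcK (hc a c x y ha0 hmem)
  · exact fun a ha0 haδ c _ =>
      Jorb_eq_zero_of_forall_notMem_tsupport fun x y hmem => (ha a c x y ha0 hmem).not_gt haδ

/-- **Support properties of the `(N,N)` orbital integral.** (i) There is a compact
`K ⊆ ℂ ∖ {0}` such that `J(a, c, f) = 0` for all `a ≠ 0` whenever `c ∉ K`; (ii) there is
`δ > 0` such that `J(a, c, f) = 0` for all `c ≠ 0` whenever `0 < |a| < δ`. -/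
theorem NN_orbital_integral_support (f : Matrix (Fin 2) (Fin 2) ℂ → ℂ)
    (hf : Continuous f) (hcs : HasCompactSupport f) (hGL : tsupport f ⊆ {g | g.det ≠ 0}) :
    (∃ K : Set ℂ, IsCompact K ∧ K ⊆ {(0 : ℂ)}ᶜ ∧
      ∀ c : ℂ, c ≠ 0 → c ∉ K → ∀ a : ℂ, a ≠ 0 → Jorb f a c = 0) ∧
    (∃ δ > (0 : ℝ), ∀ a : ℂ, a ≠ 0 → ‖a‖ < δ →
      ∀ c : ℂ, c ≠ 0 → Jorb f a c = 0) :=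
  NN_orbital_integral_support_general f hcs hGL
end

section
/- Growth of the (N,N) orbital integral: Let f : GL₂(ℂ) → ℂ be continuous and compactly supported. Then for every real ε > 0 there exist constants C, B > 0 such that |J(a, c, f)| ≤ C |a|^{2+ε} for all a, c ∈ ℂ ∖ {0} with |a| ≥ B. -/
open MeasureTheory Filter Topology Complex
open scoped ENNReal


/-!
For `a ≠ 0` the matrix `n(x) z(c) s(a) w₀ n(y)` equals `(c/a) • [[x, xy + a²], [1, y]]`, of
determinant `-c²`. On the compact support of `f` inside `GL₂(ℂ)` the entries are bounded and the
determinant is bounded away from `0`, so `|c|` is bounded below and then `|x|`, `|y|` and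
`|xy + a²|` are `O(|a|)`. For large `|a|` this forces `|x| ≳ |a|`, so `y` lies in a disc of radius
`O(1)` about `-a²/x`: the integrand lives on a set of measure `O(|a|²)`.
-/

open Set Metric Real

section Matrices

variable {m n : Type*} [Fintype m] [Fintype n]

lemma IsCompact.exists_pos_forall_norm_entry_le {α : Type*} [SeminormedAddCommGroup α]
    {K : Set (Matrix m n α)} (hK : IsCompact K) :
    ∃ R > 0, ∀ g ∈ K, ∀ i j, ‖g i j‖ ≤ R := by
  open scoped Matrix.Norms.Elementwise in
  obtain ⟨R, hR0, hR⟩ := hK.isBounded.exists_pos_norm_le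
  exact ⟨R, hR0, fun g hg i j => (Matrix.norm_entry_le_entrywise_sup_norm g).trans (hR g hg)⟩

lemma IsCompact.exists_pos_forall_le_norm_det {R : Type*} [NormedCommRing R] [DecidableEq n]
    {K : Set (Matrix n n R)} (hK : IsCompact K) (hdet : K ⊆ {g | g.det ≠ 0}) :
    ∃ δ > 0, ∀ g ∈ K, δ ≤ ‖g.det‖ :=
  hK.exists_forall_le' (by fun_prop) fun g hg => norm_pos_iff.2 (hdet hg)

end Matrices

lemma nMat_mul_zMat_mul_sMat_mul_w0Mat_mul_nMat {a : ℂ} (ha : a ≠ 0) (c x y : ℂ) :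
    nMat x * zMat c * sMat a * w0Mat * nMat y = (c * a⁻¹) • !![x, x * y + a ^ 2; 1, y] := by
  ext i j
  fin_cases i <;> fin_cases j <;>
    simp [nMat, zMat, sMat, w0Mat] <;> field_simp

section NormedField

variable {𝕜 : Type*} [NormedField 𝕜]

lemma norm_le_div_mul_of_norm_mul_inv_mul_le {a c w : 𝕜} {R s : ℝ} (ha : a ≠ 0) (hs : 0 < s)
    (hc : s ≤ ‖c‖) (hw : ‖c * a⁻¹ * w‖ ≤ R) : ‖w‖ ≤ R / s * ‖a‖ := by
  have ha' : 0 < ‖a‖ := norm_pos_iff.2 ha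
  rw [norm_mul, norm_mul, norm_inv, mul_comm ‖c‖, mul_assoc, inv_mul_le_iff₀ ha'] at hw
  rw [div_mul_eq_mul_div, le_div_iff₀ hs]
  calc ‖w‖ * s ≤ ‖c‖ * ‖w‖ := by rw [mul_comm]; gcongr
    _ ≤ R * ‖a‖ := by linarith [mul_comm ‖a‖ R]

lemma div_two_mul_le_norm_of_norm_mul_add_le {x y b : 𝕜} {N : ℝ} (hN : 0 < N) (hy : ‖y‖ ≤ N)
    (hxy : ‖x * y + b‖ ≤ N) (hb : 2 * N ≤ ‖b‖) : ‖b‖ / (2 * N) ≤ ‖x‖ := by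
  have htri : ‖b‖ ≤ ‖x * y + b‖ + ‖x‖ * ‖y‖ := by
    simpa [← norm_mul] using norm_sub_le (x * y + b) (x * y)
  rw [div_le_iff₀ (by positivity)]
  nlinarith [mul_le_mul_of_nonneg_left hy (norm_nonneg x)]

end NormedField

/-- A neighbourhood of the hyperbola `x * y = -b`, cut off at `‖x‖ ≤ r`. -/
def hyperbolaNbhd (b : ℂ) (r ρ : ℝ) : Set (ℂ × ℂ) :=
  {p | p.1 ≠ 0 ∧ ‖p.1‖ ≤ r ∧ ‖p.1 * p.2 + b‖ ≤ ρ * ‖p.1‖}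

lemma measurableSet_hyperbolaNbhd (b : ℂ) (r ρ : ℝ) : MeasurableSet (hyperbolaNbhd b r ρ) := by
  unfold hyperbolaNbhd
  measurability

lemma preimage_mk_hyperbolaNbhd_subset {b x : ℂ} (hx : x ≠ 0) (r ρ : ℝ) :
    Prod.mk x ⁻¹' hyperbolaNbhd b r ρ ⊆ closedBall (-b / x) ρ := by
  rintro y ⟨-, -, hy⟩
  have hx' : 0 < ‖x‖ := norm_pos_iff.2 hx
  rw [mem_closedBall, dist_eq_norm, ← mul_le_mul_iff_of_pos_left hx', ← norm_mul]
  calc ‖x * (y - -b / x)‖ = ‖x * y + b‖ := by congr 1; field_simp; ring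
    _ ≤ ‖x‖ * ρ := by linarith

lemma MeasureTheory.Measure.prod_le_of_forall_measure_preimage_mk_le {α β : Type*}
    [MeasurableSpace α] [MeasurableSpace β] (μ : Measure α) (ν : Measure β) {s : Set (α × β)}
    (hs : MeasurableSet s) {t : Set α} (hst : ∀ p ∈ s, p.1 ∈ t) {m : ℝ≥0∞}
    (hm : ∀ x ∈ t, ν (Prod.mk x ⁻¹' s) ≤ m) : μ.prod ν s ≤ m * μ t := by
  calc μ.prod ν s ≤ ∫⁻ x, ν (Prod.mk x ⁻¹' s) ∂μ := Measure.prod_apply_le hs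
    _ ≤ ∫⁻ x, t.indicator (fun _ => m) x ∂μ := by
      refine lintegral_mono fun x => ?_
      by_cases hx : x ∈ t
      · simpa [hx] using hm x hx
      · have : Prod.mk x ⁻¹' s = ∅ := eq_empty_of_forall_notMem fun y hy => hx (hst _ hy)
        simp [this]
    _ ≤ m * μ t := lintegral_indicator_const_le t m

lemma volume_hyperbolaNbhd_le (b : ℂ) (r ρ : ℝ) :
    volume (hyperbolaNbhd b r ρ) ≤
      volume (closedBall (0 : ℂ) ρ) * volume (closedBall (0 : ℂ) r) := by
  rw [Measure.volume_eq_prod]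
  refine Measure.prod_le_of_forall_measure_preimage_mk_le _ _ (measurableSet_hyperbolaNbhd b r ρ)
    (fun p hp => mem_closedBall_zero_iff.2 hp.2.1) fun x _ => ?_
  by_cases hx : x = 0
  · have : Prod.mk x ⁻¹' hyperbolaNbhd b r ρ = ∅ :=
      eq_empty_of_forall_notMem fun y hy => hy.1 hx
    simp [this]
  · calc volume (Prod.mk x ⁻¹' hyperbolaNbhd b r ρ) ≤ volume (closedBall (-b / x) ρ) :=
          measure_mono (preimage_mk_hyperbolaNbhd_subset hx r ρ)
      _ = volume (closedBall (0 : ℂ) ρ) := Measure.addHaar_closedBall_center _ _ _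

lemma volume_hyperbolaNbhd_lt_top (b : ℂ) (r ρ : ℝ) : volume (hyperbolaNbhd b r ρ) < ∞ :=
  (volume_hyperbolaNbhd_le b r ρ).trans_lt <| ENNReal.mul_lt_top
    measure_closedBall_lt_top measure_closedBall_lt_top

lemma volume_real_hyperbolaNbhd_le (b : ℂ) {r ρ : ℝ} (hr : 0 ≤ r) (hρ : 0 ≤ ρ) :
    volume.real (hyperbolaNbhd b r ρ) ≤ π * ρ ^ 2 * (π * r ^ 2) := by
  refine (ENNReal.toReal_mono (ENNReal.mul_lt_top measure_closedBall_lt_top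
    measure_closedBall_lt_top).ne (volume_hyperbolaNbhd_le b r ρ)).trans_eq ?_
  simp only [Complex.volume_closedBall, ENNReal.toReal_mul, ENNReal.toReal_pow,
    ENNReal.toReal_ofReal hr, ENNReal.toReal_ofReal hρ, ENNReal.coe_toReal, NNReal.coe_real_pi]
  ring

lemma mem_hyperbolaNbhd_of_nMat_mul_mem {K : Set (Matrix (Fin 2) (Fin 2) ℂ)} {R s : ℝ}
    (hR : 0 < R) (hs : 0 < s) (hentry : ∀ g ∈ K, ∀ i j, ‖g i j‖ ≤ R)
    (hdet : ∀ g ∈ K, s ^ 2 ≤ ‖g.det‖) {a c x y : ℂ} (ha : a ≠ 0) (haR : 2 * (R / s) ≤ ‖a‖)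
    (hg : nMat x * zMat c * sMat a * w0Mat * nMat y ∈ K) :
    (x, y) ∈ hyperbolaNbhd (a ^ 2) (R / s * ‖a‖) (2 * (R / s) ^ 2) := by
  set M := R / s
  rw [nMat_mul_zMat_mul_sMat_mul_w0Mat_mul_nMat ha] at hg
  have hc : s ≤ ‖c‖ := by
    have hdet_eq : ((c * a⁻¹) • !![x, x * y + a ^ 2; 1, y]).det = -c ^ 2 := by
      rw [Matrix.det_smul, Matrix.det_fin_two_of, Fintype.card_fin]
      field_simp
      ring
    have := hdet _ hg
    rw [hdet_eq, norm_neg, norm_pow] at this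
    exact (pow_le_pow_iff_left₀ hs.le (norm_nonneg c) two_ne_zero).1 this
  have hentry' (i j : Fin 2) := hentry _ hg i j
  have hx : ‖x‖ ≤ M * ‖a‖ :=
    norm_le_div_mul_of_norm_mul_inv_mul_le ha hs hc (by simpa using hentry' 0 0)
  have hy : ‖y‖ ≤ M * ‖a‖ :=
    norm_le_div_mul_of_norm_mul_inv_mul_le ha hs hc (by simpa using hentry' 1 1)
  have hxy : ‖x * y + a ^ 2‖ ≤ M * ‖a‖ :=
    norm_le_div_mul_of_norm_mul_inv_mul_le ha hs hc (by simpa using hentry' 0 1)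
  have hM : 0 < M := by positivity
  have hA : 0 < ‖a‖ := norm_pos_iff.2 ha
  have hxlow := div_two_mul_le_norm_of_norm_mul_add_le (by positivity) hy hxy
    (by rw [norm_pow]; nlinarith)
  refine ⟨norm_pos_iff.1 (lt_of_lt_of_le (by rw [norm_pow]; positivity) hxlow), hx, ?_⟩
  calc ‖x * y + a ^ 2‖ ≤ M * ‖a‖ := hxy
    _ = 2 * M ^ 2 * (‖a ^ 2‖ / (2 * (M * ‖a‖))) := by rw [norm_pow]; field_simp
    _ ≤ 2 * M ^ 2 * ‖x‖ := by gcongr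

/-- **Growth of the `(N,N)` orbital integral.** For every `ε > 0` there are `C, B > 0` with
`|J(a, c, f)| ≤ C |a|^{2+ε}` for all `a, c ≠ 0` with `|a| ≥ B`. -/
theorem NN_orbital_integral_growth (f : Matrix (Fin 2) (Fin 2) ℂ → ℂ)
    (hf : Continuous f) (hcs : HasCompactSupport f) (hGL : tsupport f ⊆ {g | g.det ≠ 0})
    (ε : ℝ) (hε : 0 < ε) :
    ∃ C > (0 : ℝ), ∃ B > (0 : ℝ), ∀ a c : ℂ, a ≠ 0 → c ≠ 0 → B ≤ ‖a‖ →
      ‖Jorb f a c‖ ≤ C * ‖a‖ ^ ((2 : ℝ) + ε) := by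
  obtain ⟨R, hR, hentry⟩ := hcs.isCompact.exists_pos_forall_norm_entry_le
  obtain ⟨δ, hδ, hdet⟩ := hcs.isCompact.exists_pos_forall_le_norm_det hGL
  obtain ⟨F, hF⟩ := hf.bounded_above_of_compact_support hcs
  have hF0 : 0 ≤ F := (norm_nonneg _).trans (hF 0)
  have hs : 0 < √δ := Real.sqrt_pos.2 hδ
  set M := R / √δ
  refine ⟨(F + 1) * (π * (2 * M ^ 2) ^ 2 * (π * M ^ 2)), by positivity, max (2 * M) 1,
    by positivity, fun a c ha _ haB => ?_⟩
  set U := hyperbolaNbhd (a ^ 2) (M * ‖a‖) (2 * M ^ 2)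
  have hvanish (p : ℂ × ℂ) (hp : p ∉ U) :
      f (nMat p.1 * zMat c * sMat a * w0Mat * nMat p.2) = 0 :=
    image_eq_zero_of_notMem_tsupport fun hg => hp <|
      mem_hyperbolaNbhd_of_nMat_mul_mem hR hs hentry (by simpa [Real.sq_sqrt hδ.le] using hdet)
        ha (le_of_max_le_left haB) hg
  calc ‖Jorb f a c‖
      = ‖∫ p in U, f (nMat p.1 * zMat c * sMat a * w0Mat * nMat p.2)‖ := by
        rw [Jorb, setIntegral_eq_integral_of_forall_compl_eq_zero hvanish]
    _ ≤ F * volume.real U :=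
        norm_setIntegral_le_of_norm_le_const (volume_hyperbolaNbhd_lt_top _ _ _) fun p _ => hF _
    _ ≤ (F + 1) * (π * (2 * M ^ 2) ^ 2 * (π * (M * ‖a‖) ^ 2)) := by
        gcongr
        · linarith
        · exact volume_real_hyperbolaNbhd_le _ (by positivity) (by positivity)
    _ = (F + 1) * (π * (2 * M ^ 2) ^ 2 * (π * M ^ 2)) * ‖a‖ ^ (2 : ℝ) := by
        rw [Real.rpow_two]; ring
    _ ≤ (F + 1) * (π * (2 * M ^ 2) ^ 2 * (π * M ^ 2)) * ‖a‖ ^ ((2 : ℝ) + ε) := by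
        gcongr
        · exact le_of_max_le_right haB
        · linarith
end

section
/- Absolute convergence of the (A,N) orbital integral: For every continuous compactly supported function f : GL₂(ℂ) → ℂ and all x, c ∈ ℂ ∖ {0}, the function (a, y) ↦ f(s(a) z(c) n(x) w₀ n(y)) is absolutely integrable on (ℂ ∖ {0}) × ℂ with respect to d×a dA(y); in particular the orbital integral M(x, c, f) = ∫_{ℂ∖{0}} ∫_ℂ f(s(a) z(c) n(x) w₀ n(y)) dA(y) d×a is well defined. -/
open MeasureTheory Filter Topology Complex
open scoped ENNReal


/-- The multiplicative Haar measure `d×a = dA(a)/|a|²` on `ℂ ∖ {0}`. -/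
noncomputable def mulHaar : Measure ℂ :=
  volume.withDensity fun a => ENNReal.ofReal ((‖a‖ ^ 2)⁻¹)

/-!
Writing `g(a, y) = s(a) z(c) n(x) w₀ n(y) = [[acx, acxy + ac], [c/a, cy/a]]`, a bound `R` on the
entries of the compact support of `f` forces `‖c‖/R ≤ ‖a‖ ≤ R/(‖c‖‖x‖)` and
`‖y‖ ≤ R²/(‖c‖²‖x‖)` whenever `f(g(a, y)) ≠ 0`. On this annulus times a ball the density `1/|a|²`
of `d×a` is bounded, so the bounded integrand vanishes off a set of finite measure.
-/

open Metric Set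

theorem sMat_mul_zMat_mul_nMat_mul_w0Mat_mul_nMat (a c x y : ℂ) :
    sMat a * zMat c * nMat x * w0Mat * nMat y =
      !![a * c * x, a * c * x * y + a * c; a⁻¹ * c, a⁻¹ * c * y] := by
  simp [sMat, zMat, nMat, w0Mat]

theorem continuousOn_sMat_mul_zMat_mul_nMat_mul_w0Mat_mul_nMat (c x : ℂ) :
    ContinuousOn (fun p : ℂ × ℂ => sMat p.1 * zMat c * nMat x * w0Mat * nMat p.2)
      ({0}ᶜ ×ˢ univ) := by
  simp_rw [sMat_mul_zMat_mul_nMat_mul_w0Mat_mul_nMat]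
  refine continuousOn_pi.2 fun i => continuousOn_pi.2 fun j => ?_
  fin_cases i <;> fin_cases j <;> simp <;> fun_prop (disch := simp_all)

theorem IsCompact.exists_pos_bound_matrix_entries {m n α : Type*} [Fintype m] [Fintype n]
    [SeminormedAddCommGroup α] {K : Set (Matrix m n α)} (hK : IsCompact K) :
    ∃ R > 0, ∀ g ∈ K, ∀ i j, ‖g i j‖ ≤ R := by
  let := Matrix.seminormedAddCommGroup (m := m) (n := n) (α := α)
  obtain ⟨R, hR⟩ := isBounded_iff_forall_norm_le.1 hK.isBounded
  exact ⟨max R 1, by positivity, fun g hg i j =>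
    g.norm_entry_le_entrywise_sup_norm.trans ((hR g hg).trans (le_max_left _ _))⟩

theorem mulHaar_closedBall_diff_ball_lt_top {ε : ℝ} (hε : 0 < ε) (M : ℝ) :
    mulHaar (closedBall 0 M \ ball 0 ε) < ∞ := by
  have hs : MeasurableSet (closedBall (0 : ℂ) M \ ball 0 ε) :=
    measurableSet_closedBall.diff measurableSet_ball
  rw [mulHaar, withDensity_apply _ hs]
  calc ∫⁻ a : ℂ in closedBall 0 M \ ball 0 ε, ENNReal.ofReal ((‖a‖ ^ 2)⁻¹)
      ≤ ∫⁻ _ in closedBall (0 : ℂ) M \ ball 0 ε, ENNReal.ofReal ((ε ^ 2)⁻¹) := by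
        refine setLIntegral_mono measurable_const fun a ha => ?_
        have : ε ≤ ‖a‖ := by simpa using ha.2
        gcongr
    _ ≤ ENNReal.ofReal ((ε ^ 2)⁻¹) * volume (closedBall (0 : ℂ) M) := by
        rw [setLIntegral_const]
        gcongr
        exact sdiff_subset
    _ < ∞ := ENNReal.mul_lt_top ENNReal.ofReal_lt_top measure_closedBall_lt_top

theorem mem_annulus_prod_closedBall_of_norm_entries_le {a c x y : ℂ} {R : ℝ}
    (ha : a ≠ 0) (hc : c ≠ 0) (hx : x ≠ 0)
    (h₀₀ : ‖a * c * x‖ ≤ R) (h₁₀ : ‖a⁻¹ * c‖ ≤ R) (h₁₁ : ‖a⁻¹ * c * y‖ ≤ R) :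
    (a, y) ∈ (closedBall 0 (R / (‖c‖ * ‖x‖)) \ ball 0 (‖c‖ / R)) ×ˢ
      closedBall 0 (R ^ 2 / (‖c‖ ^ 2 * ‖x‖)) := by
  have ha' : 0 < ‖a‖ := norm_pos_iff.2 ha
  have hc' : 0 < ‖c‖ := norm_pos_iff.2 hc
  have hx' : 0 < ‖x‖ := norm_pos_iff.2 hx
  simp only [norm_mul, norm_inv] at h₀₀ h₁₀ h₁₁
  have hR : 0 < R := lt_of_lt_of_le (by positivity) h₁₀
  have ha_le : ‖a‖ ≤ R / (‖c‖ * ‖x‖) := by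
    rw [le_div_iff₀ (by positivity)]; linarith
  have hy_le : ‖y‖ ≤ R * ‖a‖ / ‖c‖ := by
    rw [le_div_iff₀ hc']
    calc ‖y‖ * ‖c‖ = ‖a‖⁻¹ * ‖c‖ * ‖y‖ * ‖a‖ := by field_simp
      _ ≤ R * ‖a‖ := by gcongr
  simp only [mem_prod, Set.mem_sdiff, mem_closedBall, mem_ball, dist_zero_right, not_lt]
  refine ⟨⟨ha_le, ?_⟩, ?_⟩
  · rw [div_le_iff₀ hR]
    calc ‖c‖ = ‖a‖⁻¹ * ‖c‖ * ‖a‖ := by field_simp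
      _ ≤ ‖a‖ * R := by nlinarith
  · calc ‖y‖ ≤ R * ‖a‖ / ‖c‖ := hy_le
      _ ≤ R * (R / (‖c‖ * ‖x‖)) / ‖c‖ := by gcongr
      _ = R ^ 2 / (‖c‖ ^ 2 * ‖x‖) := by field_simp

theorem AN_orbital_integral_convergence_general (f : Matrix (Fin 2) (Fin 2) ℂ → ℂ)
    (hf : Continuous f) (hcs : HasCompactSupport f)
    (x c : ℂ) (hx : x ≠ 0) (hc : c ≠ 0) :
    IntegrableOn (fun p : ℂ × ℂ => f (sMat p.1 * zMat c * nMat x * w0Mat * nMat p.2))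
      ({(0 : ℂ)}ᶜ ×ˢ (Set.univ : Set ℂ)) (mulHaar.prod volume) := by
  obtain ⟨C, hC⟩ := hcs.exists_bound_of_continuous hf
  obtain ⟨R, hR, hent⟩ := IsCompact.exists_pos_bound_matrix_entries hcs
  have hε : 0 < ‖c‖ / R := div_pos (norm_pos_iff.2 hc) hR
  set S : Set (ℂ × ℂ) := (closedBall 0 (R / (‖c‖ * ‖x‖)) \ ball 0 (‖c‖ / R)) ×ˢ
    closedBall (0 : ℂ) (R ^ 2 / (‖c‖ ^ 2 * ‖x‖))
  have hS : MeasurableSet S :=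
    (measurableSet_closedBall.diff measurableSet_ball).prod measurableSet_closedBall
  have hSU : S ⊆ {0}ᶜ ×ˢ univ := fun p hp =>
    ⟨fun h0 => hp.1.2 (by rw [Set.mem_singleton_iff.1 h0]; exact mem_ball_self hε), trivial⟩
  have hS_lt_top : (mulHaar.prod volume) S < ∞ := by
    rw [Measure.prod_prod]
    exact ENNReal.mul_lt_top (mulHaar_closedBall_diff_ball_lt_top hε _)
      measure_closedBall_lt_top
  have hcont :=
    hf.comp_continuousOn (continuousOn_sMat_mul_zMat_mul_nMat_mul_w0Mat_mul_nMat c x)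
  refine (IntegrableOn.of_bound hS_lt_top ((hcont.mono hSU).aestronglyMeasurable hS) C
    (ae_of_all _ fun p => hC _)).of_forall_sdiff_eq_zero
    ((measurableSet_singleton 0).compl.prod MeasurableSet.univ) ?_
  rintro ⟨a, y⟩ ⟨⟨ha, -⟩, hpS⟩
  refine image_eq_zero_of_notMem_tsupport (f := f) fun hmem => hpS ?_
  have hg := hent _ hmem
  simp only [sMat_mul_zMat_mul_nMat_mul_w0Mat_mul_nMat] at hg
  exact mem_annulus_prod_closedBall_of_norm_entries_le ha hc hx (hg 0 0) (hg 1 0) (hg 1 1)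

/-- **Absolute convergence of the `(A,N)` orbital integral.** For continuous compactly
supported `f : GL₂(ℂ) → ℂ` and `x, c ≠ 0`, the function `(a, y) ↦ f(s(a) z(c) n(x) w₀ n(y))`
is absolutely integrable on `(ℂ ∖ {0}) × ℂ` with respect to `d×a dA(y)`. -/
theorem AN_orbital_integral_convergence (f : Matrix (Fin 2) (Fin 2) ℂ → ℂ)
    (hf : Continuous f) (hcs : HasCompactSupport f) (hGL : tsupport f ⊆ {g | g.det ≠ 0})
    (x c : ℂ) (hx : x ≠ 0) (hc : c ≠ 0) :
    IntegrableOn (fun p : ℂ × ℂ => f (sMat p.1 * zMat c * nMat x * w0Mat * nMat p.2))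
      ({(0 : ℂ)}ᶜ ×ˢ (Set.univ : Set ℂ)) (mulHaar.prod volume) :=
  AN_orbital_integral_convergence_general f hf hcs x c hx hc
end
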